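/- Let B be a simple Bratteli diagram with full group G=G_B and path space X=X_B. For any clopen sets A,C⊆X with A∪C≠X, one has F(A∩C)=F(A)∩F(C). -/

import Mathlib

open MeasureTheory Filter
open scoped ENNReal ComplexOrder

noncomputable section

/-- A Bratteli diagram: vertex levels `V i`, edge levels `E i` (edges from `V i` to `V (i+1)`),
all levels finite and nonempty, a single root vertex, and source/range maps that are
surjective (every vertex emits and receives an edge). -/
structure BratteliDiagram where
  V : ℕ → Type
  E : ℕ → Type
  fintypeV : ∀ i, Fintype (V i)
  fintypeE : ∀ i, Fintype (E i)
  nonemptyV : ∀ i, Nonempty (V i)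
  nonemptyE : ∀ i, Nonempty (E i)
  subsingleton_root : Subsingleton (V 0)
  src : ∀ i, E i → V i
  rng : ∀ i, E i → V (i + 1)
  src_surj : ∀ i, Function.Surjective (src i)
  rng_surj : ∀ i, Function.Surjective (rng i)

namespace BratteliDiagram

variable (B : BratteliDiagram)

/-- The path space `X_B`: infinite paths starting at the root. -/
def Path : Type :=
  { x : ∀ i, B.E i // ∀ i, B.rng i (x i) = B.src (i + 1) (x (i + 1)) }

instance (i : ℕ) : UniformSpace (B.E i) := ⊥

instance instUniformSpacePath : UniformSpace B.Path :=
  inferInstanceAs (UniformSpace { x : ∀ i, B.E i // ∀ i, B.rng i (x i) = B.src (i + 1) (x (i + 1)) })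

instance instMeasurableSpacePath : MeasurableSpace B.Path := borel _

/-- Finite segments of `L+1` consecutive edges starting at level `n`. -/
def Seg (n L : ℕ) : Type :=
  { f : ∀ i : Fin (L + 1), B.E (n + (i : ℕ)) //
    ∀ (i : ℕ) (hi : i < L),
      B.rng (n + i) (f ⟨i, by omega⟩) = B.src (n + (i + 1)) (f ⟨i + 1, by omega⟩) }

/-- The number of finite paths connecting `v ∈ V n` to `w ∈ V (n + L + 1)`. -/
def numPaths (n L : ℕ) (v : B.V n) (w : B.V (n + L + 1)) : ℕ :=
  Nat.card { f : B.Seg n L //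
    B.src n (f.1 ⟨0, by omega⟩) = v ∧ B.rng (n + L) (f.1 ⟨L, by omega⟩) = w }

/-- A Bratteli diagram is simple if every vertex of a given level is connected
to every vertex of some deeper level. -/
def IsSimple : Prop :=
  ∀ n : ℕ, ∃ L : ℕ, ∀ (v : B.V n) (w : B.V (n + L + 1)), 0 < B.numPaths n L v w

/-- A Bratteli diagram is even if every vertex of a given level is connected to every
vertex of some deeper level by a (positive) even number of paths. -/
def IsEven : Prop :=
  ∀ n : ℕ, ∃ L : ℕ, ∀ (v : B.V n) (w : B.V (n + L + 1)),
    0 < B.numPaths n L v w ∧ Even (B.numPaths n L v w)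

/-- A permutation of the path space "of level `n`": it changes only the first `n` edges,
and what it does to the first `n` edges depends only on the first `n` edges. -/
def IsLevel (n : ℕ) (g : Equiv.Perm B.Path) : Prop :=
  (∀ (x : B.Path) (i : ℕ), n ≤ i → (g x).1 i = x.1 i) ∧
  (∀ x y : B.Path, (∀ i : ℕ, i < n → x.1 i = y.1 i) → ∀ i : ℕ, i < n → (g x).1 i = (g y).1 i)

theorem isLevel_one (n : ℕ) : B.IsLevel n 1 :=
  ⟨fun _ _ _ => rfl, fun _ _ h i hi => h i hi⟩

theorem IsLevel.mul {n : ℕ} {a b : Equiv.Perm B.Path} (ha : B.IsLevel n a)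
    (hb : B.IsLevel n b) : B.IsLevel n (a * b) := by
  constructor
  · intro x i hi
    have h1 := ha.1 (b x) i hi
    have h2 := hb.1 x i hi
    simpa [Equiv.Perm.mul_apply] using h1.trans h2
  · intro x y hxy i hi
    have h2 := hb.2 x y hxy
    have := ha.2 (b x) (b y) h2 i hi
    simpa [Equiv.Perm.mul_apply] using this

theorem IsLevel.mono {n m : ℕ} (hnm : n ≤ m) {g : Equiv.Perm B.Path}
    (h : B.IsLevel n g) : B.IsLevel m g := by
  refine ⟨fun x i hi => h.1 x i (hnm.trans hi), fun x y hxy i hi => ?_⟩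
  rcases lt_or_ge i n with h' | h'
  · exact h.2 x y (fun j hj => hxy j (hj.trans_le hnm)) i h'
  · rw [h.1 x i h', h.1 y i h']
    exact hxy i hi

/-- The group `G_n` of homeomorphisms of the path space permuting only the
first `n` edges of infinite paths. -/
def level (n : ℕ) : Subgroup (Equiv.Perm B.Path) where
  carrier := { g | B.IsLevel n g ∧ B.IsLevel n g⁻¹ }
  one_mem' := ⟨B.isLevel_one n, by simpa using B.isLevel_one n⟩
  mul_mem' := by
    intro a b ha hb
    exact ⟨ha.1.mul B hb.1, by rw [mul_inv_rev]; exact IsLevel.mul B hb.2 ha.2⟩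
  inv_mem' := by
    intro a ha
    exact ⟨ha.2, by simpa using ha.1⟩

theorem level_mono {n m : ℕ} (h : n ≤ m) : B.level n ≤ B.level m := by
  intro g hg
  exact ⟨hg.1.mono B h, hg.2.mono B h⟩

/-- The full group `G_B = ⋃ n, G_n` of the Bratteli diagram. -/
def fullGroup : Subgroup (Equiv.Perm B.Path) where
  carrier := { g | ∃ n, g ∈ B.level n }
  one_mem' := ⟨0, one_mem _⟩
  mul_mem' := by
    rintro a b ⟨n, ha⟩ ⟨m, hb⟩
    exact ⟨max n m, mul_mem (B.level_mono (le_max_left n m) ha)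
      (B.level_mono (le_max_right n m) hb)⟩
  inv_mem' := by
    rintro a ⟨n, ha⟩
    exact ⟨n, inv_mem ha⟩

/-- `G_n` viewed as a subgroup of the full group. -/
def levelIn (n : ℕ) : Subgroup ↥B.fullGroup := (B.level n).comap B.fullGroup.subtype

/-- The subgroup `G°(A)` of elements of the full group fixing `A` pointwise. -/
def Gcirc (A : Set B.Path) : Subgroup ↥B.fullGroup :=
  ⨅ x ∈ A, MulAction.stabilizer ↥B.fullGroup x

/-- `G°_n(A) = G_n ∩ G°(A)`. -/
def GcircN (n : ℕ) (A : Set B.Path) : Subgroup ↥B.fullGroup :=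
  B.levelIn n ⊓ B.Gcirc A

end BratteliDiagram

/-- Conjugation of a subgroup: `g • H = gHg⁻¹`. -/
def conjSub {Γ : Type*} [Group Γ] (g : Γ) (H : Subgroup Γ) : Subgroup Γ :=
  Subgroup.map (MulAut.conj g).toMonoidHom H

/-- The Borel structure on the space `Sub(Γ)` of subgroups of `Γ`,
induced from the product space `{0,1}^Γ` (equivalently `Set Γ`). -/
instance subgroupMeasurableSpace {Γ : Type*} [Group Γ] : MeasurableSpace (Subgroup Γ) :=
  MeasurableSpace.comap (fun H => (H : Set Γ)) inferInstance

namespace BratteliDiagram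

variable (B : BratteliDiagram)

/-- `F(A)`: the collection of subgroups of the full group normalized by `G°(A)`. -/
def FF (A : Set B.Path) : Set (Subgroup ↥B.fullGroup) :=
  { H | ∀ g ∈ B.Gcirc A, conjSub g H = H }

end BratteliDiagram

/-- A measure `ν` on `Y` is invariant under the action of `G`. -/
def MeasInv (G : Type*) [Group G] {Y : Type*} [MeasurableSpace Y] [MulAction G Y]
    (ν : Measure Y) : Prop :=
  ∀ (g : G) (s : Set Y), MeasurableSet s → ν ((fun y => g • y) ⁻¹' s) = ν s

/-- The action of `G` on `(Y, ν)` is ergodic: every invariant measurable set is null or conull. -/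
def MeasErg (G : Type*) [Group G] {Y : Type*} [MeasurableSpace Y] [MulAction G Y]
    (ν : Measure Y) : Prop :=
  ∀ s : Set Y, MeasurableSet s → (∀ g : G, (fun y => g • y) ⁻¹' s = s) → ν s = 0 ∨ ν s = 1

/-- An invariant random subgroup: a conjugation-invariant Borel probability measure on `Sub(G)`. -/
def IsIRS (G : Type*) [Group G] (φ : Measure (Subgroup G)) : Prop :=
  IsProbabilityMeasure φ ∧
    ∀ (g : G) (s : Set (Subgroup G)), MeasurableSet s → φ (conjSub g ⁻¹' s) = φ s

/-- An ergodic invariant random subgroup. -/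
def IsErgodicIRS (G : Type*) [Group G] (φ : Measure (Subgroup G)) : Prop :=
  IsIRS G φ ∧
    ∀ s : Set (Subgroup G), MeasurableSet s → (∀ g : G, conjSub g ⁻¹' s = s) →
      φ s = 0 ∨ φ s = 1

/-- A character of a group: normalized, central, positive semidefinite complex function. -/
def IsCharacter (G : Type*) [Group G] (χ : G → ℂ) : Prop :=
  χ 1 = 1 ∧ (∀ a b : G, χ (a * b) = χ (b * a)) ∧
    ∀ (n : ℕ) (g : Fin n → G) (c : Fin n → ℂ),
      0 ≤ ∑ i, ∑ j, (starRingEnd ℂ) (c i) * c j * χ (g i * (g j)⁻¹)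

namespace BratteliDiagram

variable (B : BratteliDiagram)

/-- The product measure `μ_α = μ_1^{α_1} × ⋯ × μ_k^{α_k}` on `X^{|α|}`,
realized on the index type `Σ i : Fin k, Fin (α i)` (of cardinality `|α| = Σ α i`). -/
def prodMeasure {k : ℕ} (μ : Fin k → Measure B.Path) (α : Fin k → ℕ) :
    Measure ((Σ i : Fin k, Fin (α i)) → B.Path) :=
  Measure.pi fun p => μ p.1

/-- The stabilizer distribution `φ_α` of the diagonal action of the full group
on `(X^{|α|}, μ_α)`. -/
def stabDist {k : ℕ} (μ : Fin k → Measure B.Path) (α : Fin k → ℕ) :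
    Measure (Subgroup ↥B.fullGroup) :=
  Measure.map (fun y => MulAction.stabilizer ↥B.fullGroup y) (B.prodMeasure μ α)

end BratteliDiagram

/-!
Always `G°(A) ⊔ G°(C) ≤ G°(A ∩ C)`, and `F(D)` is the set of subgroups whose normalizer contains
`G°(D)`, so it suffices to show that `G°(A ∩ C)` is generated by `G°(A)` and `G°(C)`.
Take a level `n` at which `A` and `C` are unions of cylinders of length `n` and at which a given
`g ∈ G°(A ∩ C)` lives. Then `g` permutes the `n`-cylinders outside `A ∩ C`, so it is a product of
swaps of two such cylinders with a common tail. A swap of two cylinders avoiding `A` (resp. `C`)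
lies in `G°(A)` (resp. `G°(C)`). Otherwise one cylinder `p` avoids `A` but not `C` and the other
`q` avoids `C` but not `A`; by simplicity and `A ∪ C ≠ X` there is a third cylinder `r` with the
same tail avoiding `A ∪ C`, and `(p q) = (p r) (r q) (p r)` with factors in `G°(A)`, `G°(C)`,
`G°(A)`.
-/

namespace BratteliDiagram

variable {B : BratteliDiagram}

instance (i : ℕ) : Fintype (B.E i) := B.fintypeE i

instance (i : ℕ) : DecidableEq (B.E i) := Classical.decEq _

instance (i : ℕ) : DiscreteTopology (B.E i) := ⟨rfl⟩

instance : CompactSpace B.Path := by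
  refine isCompact_iff_compactSpace.mp (IsClosed.isCompact
    (s := {x : ∀ i, B.E i | ∀ i, B.rng i (x i) = B.src (i + 1) (x (i + 1))}) ?_)
  rw [Set.ofPred_forall]
  exact isClosed_iInter fun i => (isClosed_discrete
    {e : B.E i × B.E (i + 1) | B.rng i e.1 = B.src (i + 1) e.2}).preimage
    ((continuous_apply i).prodMk (continuous_apply (i + 1)))

def pr (n : ℕ) (x : B.Path) : ∀ i : Fin n, B.E i := fun i => x.1 i

theorem pr_eq_pr_iff {n : ℕ} {x y : B.Path} : pr n x = pr n y ↔ ∀ i < n, x.1 i = y.1 i :=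
  ⟨fun h i hi => congrFun h ⟨i, hi⟩, fun h => funext fun i => h i i.2⟩

theorem exists_pr_eq_imp_mem_of_mem_uniformity {V : Set (B.Path × B.Path)}
    (hV : V ∈ uniformity B.Path) : ∃ n, ∀ x y : B.Path, pr n x = pr n y → (x, y) ∈ V := by
  obtain ⟨W, hW, hWV⟩ := (uniformity_comap _ ▸ hV : V ∈ Filter.comap _ _)
  rw [Pi.uniformity, Filter.mem_iInf] at hW
  obtain ⟨I, hI, U, hU, rfl⟩ := hW
  obtain ⟨n, hn⟩ := hI.bddAbove
  refine ⟨n + 1, fun x y hxy => hWV (Set.mem_iInter.2 fun i => ?_)⟩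
  obtain ⟨t, ht, htU⟩ := Filter.mem_comap.1 (hU i)
  apply htU
  show (x.1 i, y.1 i) ∈ t
  rw [pr_eq_pr_iff.1 hxy i (Nat.lt_succ_of_le (hn i.2))]
  exact refl_mem_uniformity ht

def Determined (n : ℕ) (A : Set B.Path) : Prop :=
  ∀ x y : B.Path, pr n x = pr n y → (x ∈ A ↔ y ∈ A)

theorem exists_determined_of_isClopen {A : Set B.Path} (hA : IsClopen A) :
    ∃ n, Determined n A := by
  have hnhds (x : B.Path) : {y | y ∈ A ↔ x ∈ A} ∈ nhds x := by
    by_cases hx : x ∈ A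
    · simp only [hx, iff_true]
      exact hA.isOpen.mem_nhds hx
    · simp only [hx, iff_false]
      exact hA.compl.isOpen.mem_nhds hx
  obtain ⟨V, hV, hVA⟩ := lebesgue_number_lemma_nhds isCompact_univ fun x _ => hnhds x
  obtain ⟨n, hn⟩ := exists_pr_eq_imp_mem_of_mem_uniformity hV
  refine ⟨n, fun x y hxy => ?_⟩
  obtain ⟨z, hz⟩ := hVA x (Set.mem_univ x)
  exact (hz (UniformSpace.mem_ball_self x hV)).trans (hz (hn x y hxy)).symm

theorem Determined.mono {m n : ℕ} {A : Set B.Path} (hA : Determined m A) (hmn : m ≤ n) :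
    Determined n A := fun x y hxy =>
  hA x y (pr_eq_pr_iff.2 fun i hi => pr_eq_pr_iff.1 hxy i (hi.trans_le hmn))

theorem Determined.inter {n : ℕ} {A C : Set B.Path} (hA : Determined n A) (hC : Determined n C) :
    Determined n (A ∩ C) := fun x y hxy => and_congr (hA x y hxy) (hC x y hxy)

theorem Determined.union {n : ℕ} {A C : Set B.Path} (hA : Determined n A) (hC : Determined n C) :
    Determined n (A ∪ C) := fun x y hxy => or_congr (hA x y hxy) (hC x y hxy)

theorem ext_of_pr_eq {n : ℕ} {x y : B.Path} (hpr : pr n x = pr n y)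
    (htail : ∀ i, n ≤ i → x.1 i = y.1 i) : x = y :=
  Subtype.ext <| funext fun i =>
    (lt_or_ge i n).elim (pr_eq_pr_iff.1 hpr i) (htail i)

theorem src_eq_of_pr_eq {n : ℕ} {x y : B.Path} (h : pr n x = pr n y) :
    B.src n (x.1 n) = B.src n (y.1 n) := by
  cases n with
  | zero => exact B.subsingleton_root.elim _ _
  | succ k => rw [← x.2 k, ← y.2 k, pr_eq_pr_iff.1 h k k.lt_succ_self]

theorem IsLevel.pr_apply_eq {n : ℕ} {g : Equiv.Perm B.Path} (hg : B.IsLevel n g) {x y : B.Path}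
    (h : pr n x = pr n y) : pr n (g x) = pr n (g y) :=
  pr_eq_pr_iff.2 (hg.2 x y (pr_eq_pr_iff.1 h))

theorem pr_apply_eq_iff {n : ℕ} {g : Equiv.Perm B.Path} (hg : g ∈ B.level n) {x y : B.Path} :
    pr n (g x) = pr n (g y) ↔ pr n x = pr n y := by
  refine ⟨fun h => ?_, hg.1.pr_apply_eq⟩
  simpa using hg.2.pr_apply_eq h

theorem isLevel_of_pr_apply {n : ℕ} {g : Equiv.Perm B.Path}
    (htail : ∀ x i, n ≤ i → (g x).1 i = x.1 i) (φ : (∀ i : Fin n, B.E i) → ∀ i : Fin n, B.E i)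
    (hφ : ∀ x, pr n (g x) = φ (pr n x)) : B.IsLevel n g :=
  ⟨htail, fun x y hxy => pr_eq_pr_iff.1 (by rw [hφ, hφ, pr_eq_pr_iff.2 hxy])⟩

def glue (n : ℕ) (p x : B.Path) (h : B.src n (p.1 n) = B.src n (x.1 n)) : B.Path :=
  ⟨fun i => if i < n then p.1 i else x.1 i, fun i => by
    rcases lt_trichotomy (i + 1) n with hi | rfl | hi
    · simp only [if_pos hi, if_pos (Nat.lt_of_succ_lt hi)]
      exact p.2 i
    · simp only [if_pos i.lt_succ_self, lt_irrefl, if_false]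
      exact (p.2 i).trans h
    · simp only [if_neg (by omega : ¬ i < n), if_neg (by omega : ¬ i + 1 < n)]
      exact x.2 i⟩

theorem pr_glue {n : ℕ} {p x : B.Path} (h) : pr n (glue n p x h) = pr n p :=
  funext fun i => if_pos i.2

theorem glue_apply_of_le {n : ℕ} {p x : B.Path} (h) {i : ℕ} (hi : n ≤ i) :
    (glue n p x h).1 i = x.1 i :=
  if_neg hi.not_gt

section CylinderSwap

variable (n : ℕ) (p q : B.Path) (hpq : ∀ i, n ≤ i → p.1 i = q.1 i)

def cylSwapFun (x : B.Path) : B.Path :=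
  if hp : pr n x = pr n p then
    glue n q x (by rw [← hpq n le_rfl]; exact src_eq_of_pr_eq hp.symm)
  else if hq : pr n x = pr n q then
    glue n p x (by rw [hpq n le_rfl]; exact src_eq_of_pr_eq hq.symm)
  else x

theorem pr_cylSwapFun (x : B.Path) :
    pr n (cylSwapFun n p q hpq x) = Equiv.swap (pr n p) (pr n q) (pr n x) := by
  unfold cylSwapFun
  split_ifs with hp hq
  · rw [pr_glue, hp, Equiv.swap_apply_left]
  · rw [pr_glue, hq, Equiv.swap_apply_right]
  · rw [Equiv.swap_apply_of_ne_of_ne hp hq]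

theorem cylSwapFun_apply_of_le (x : B.Path) {i : ℕ} (hi : n ≤ i) :
    (cylSwapFun n p q hpq x).1 i = x.1 i := by
  unfold cylSwapFun
  split_ifs <;> simp only [glue_apply_of_le _ hi]

theorem cylSwapFun_involutive : Function.Involutive (cylSwapFun n p q hpq) := fun x =>
  ext_of_pr_eq (by rw [pr_cylSwapFun, pr_cylSwapFun, Equiv.swap_apply_self]) fun i hi => by
    rw [cylSwapFun_apply_of_le _ _ _ _ _ hi, cylSwapFun_apply_of_le _ _ _ _ _ hi]

theorem cylSwapFun_mem_level :
    (cylSwapFun_involutive n p q hpq).toPerm ∈ B.level n := by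
  have h : B.IsLevel n (cylSwapFun_involutive n p q hpq).toPerm :=
    isLevel_of_pr_apply (fun x _ => cylSwapFun_apply_of_le n p q hpq x) (Equiv.swap _ _)
      (pr_cylSwapFun n p q hpq)
  exact ⟨h, by rwa [Equiv.Perm.inv_def, Function.Involutive.toPerm_symm]⟩

def cylSwap : B.fullGroup :=
  ⟨(cylSwapFun_involutive n p q hpq).toPerm, n, cylSwapFun_mem_level n p q hpq⟩

theorem cylSwap_mem_level : (cylSwap n p q hpq).1 ∈ B.level n :=
  cylSwapFun_mem_level n p q hpq

theorem pr_cylSwap_apply (x : B.Path) :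
    pr n ((cylSwap n p q hpq).1 x) = Equiv.swap (pr n p) (pr n q) (pr n x) :=
  pr_cylSwapFun n p q hpq x

theorem cylSwap_apply_of_le (x : B.Path) {i : ℕ} (hi : n ≤ i) :
    ((cylSwap n p q hpq).1 x).1 i = x.1 i :=
  cylSwapFun_apply_of_le n p q hpq x hi

theorem cylSwap_apply_of_ne {x : B.Path} (hp : pr n x ≠ pr n p) (hq : pr n x ≠ pr n q) :
    (cylSwap n p q hpq).1 x = x := by
  change cylSwapFun n p q hpq x = x
  rw [cylSwapFun, dif_neg hp, dif_neg hq]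

end CylinderSwap

theorem cylSwap_eq_conj {n : ℕ} {p q r : B.Path} (hpq : ∀ i, n ≤ i → p.1 i = q.1 i)
    (hpr : ∀ i, n ≤ i → p.1 i = r.1 i) (hrq : ∀ i, n ≤ i → r.1 i = q.1 i)
    (hqp : pr n q ≠ pr n p) (hqr : pr n q ≠ pr n r) :
    cylSwap n p q hpq = cylSwap n p r hpr * cylSwap n r q hrq * cylSwap n p r hpr := by
  have hswap := Equiv.swap_apply_apply (Equiv.swap (pr n p) (pr n r)) (pr n r) (pr n q)
  rw [Equiv.swap_apply_right, Equiv.swap_apply_of_ne_of_ne hqp hqr, Equiv.swap_inv] at hswap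
  refine Subtype.ext <| Equiv.ext fun x => ext_of_pr_eq (n := n) ?_ fun i hi => ?_
  · simp only [Subgroup.coe_mul, Equiv.Perm.mul_apply, pr_cylSwap_apply, hswap]
  · simp only [Subgroup.coe_mul, Equiv.Perm.mul_apply, cylSwap_apply_of_le _ _ _ _ _ hi]

theorem mem_Gcirc_iff {D : Set B.Path} {g : B.fullGroup} :
    g ∈ B.Gcirc D ↔ ∀ x ∈ D, g.1 x = x := by
  simp only [Gcirc, Subgroup.mem_iInf, MulAction.mem_stabilizer_iff]
  rfl

theorem Gcirc_anti {D D' : Set B.Path} (h : D ⊆ D') : B.Gcirc D' ≤ B.Gcirc D :=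
  fun _ hg => mem_Gcirc_iff.2 fun x hx => mem_Gcirc_iff.1 hg x (h hx)

theorem cylSwap_mem_Gcirc {n : ℕ} {D : Set B.Path} (hD : Determined n D) {p q : B.Path}
    (hpq : ∀ i, n ≤ i → p.1 i = q.1 i) (hp : p ∉ D) (hq : q ∉ D) :
    cylSwap n p q hpq ∈ B.Gcirc D :=
  mem_Gcirc_iff.2 fun x hx =>
    cylSwap_apply_of_ne n p q hpq (fun h => hp ((hD x p h).1 hx)) fun h => hq ((hD x q h).1 hx)

def moved (n : ℕ) (g : Equiv.Perm B.Path) : Set (∀ i : Fin n, B.E i) :=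
  pr n '' {x | pr n (g x) ≠ pr n x}

theorem eq_one_of_moved_eq_empty {n : ℕ} {g : Equiv.Perm B.Path} (hg : g ∈ B.level n)
    (h : moved n g = ∅) : g = 1 :=
  Equiv.ext fun x => ext_of_pr_eq (n := n)
    (not_not.1 fun hx => (Set.image_eq_empty.1 h).subset hx) (hg.1.1 x)

theorem moved_cylSwap_mul_subset {n : ℕ} {g : Equiv.Perm B.Path} (hg : g ∈ B.level n)
    {x : B.Path} (hpq : ∀ i, n ≤ i → x.1 i = (g x).1 i) (hx : pr n (g x) ≠ pr n x) :
    moved n ((cylSwap n x (g x) hpq).1 * g) ⊆ moved n g \ {pr n x} := by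
  rintro _ ⟨y, hy, rfl⟩
  rw [Set.mem_ofPred_eq, Equiv.Perm.mul_apply, pr_cylSwap_apply] at hy
  refine ⟨⟨y, fun hgy => hy ?_, rfl⟩, fun hyx => hy ?_⟩
  · rw [hgy]
    refine Equiv.swap_apply_of_ne_of_ne (fun hyx => hx ?_) fun hygx => hx ?_
    · rw [← (pr_apply_eq_iff hg).2 hyx, hgy, hyx]
    · rw [← hygx, ← (pr_apply_eq_iff hg).1 (hgy.trans hygx), hygx]
  · rw [(pr_apply_eq_iff hg).2 hyx, Equiv.swap_apply_right, hyx]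

theorem GcircN_le_of_cylSwap_mem {n : ℕ} {D : Set B.Path} (hD : Determined n D)
    {S : Subgroup B.fullGroup}
    (hS : ∀ p q hpq, p ∉ D → q ∉ D → cylSwap n p q hpq ∈ S) : B.GcircN n D ≤ S := by
  rintro g ⟨hgn, hgD⟩
  induction hk : (moved n g.1).ncard using Nat.strong_induction_on generalizing g with
  | _ k ih =>
  obtain hempty | ⟨_, ⟨x, hx, rfl⟩⟩ := (moved n g.1).eq_empty_or_nonempty
  · rw [show g = 1 from Subtype.ext (eq_one_of_moved_eq_empty hgn hempty)]
    exact one_mem S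
  have hfix := mem_Gcirc_iff.1 hgD
  have hxD : x ∉ D := fun h => hx (by rw [hfix x h])
  have hgxD : g.1 x ∉ D := fun h => hx (by rw [g.1.injective (hfix _ h)])
  have hpq : ∀ i, n ≤ i → x.1 i = (g.1 x).1 i := fun i hi => (hgn.1.1 x i hi).symm
  have hlt : (moved n (cylSwap n x (g.1 x) hpq * g).1).ncard < k := hk ▸
    ((Set.ncard_le_ncard (moved_cylSwap_mul_subset hgn hpq hx) (Set.toFinite _)).trans_lt
      (Set.ncard_sdiff_singleton_lt_of_mem ⟨x, hx, rfl⟩ (Set.toFinite _)))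
  have hτg := ih _ hlt (mul_mem (cylSwap_mem_level n _ _ hpq) hgn)
    (mul_mem (cylSwap_mem_Gcirc hD hpq hxD hgxD) hgD) rfl
  simpa using mul_mem (inv_mem (hS _ _ hpq hxD hgxD)) hτg

theorem exists_path_prefix_tail {m L : ℕ} (hL : ∀ v w, 0 < B.numPaths m L v w) (z x : B.Path) :
    ∃ r : B.Path, (∀ i < m, r.1 i = z.1 i) ∧ ∀ i, m + L + 1 ≤ i → r.1 i = x.1 i := by
  obtain ⟨⟨f, hfz, hfx⟩⟩ :=
    (Nat.card_pos_iff.1 (hL (B.src m (z.1 m)) (B.src (m + L + 1) (x.1 (m + L + 1))))).1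
  let r : ∀ j, B.E j := fun j =>
    if hjm : j < m then z.1 j
    else if hjL : j ≤ m + L then
      cast (congrArg B.E (Nat.add_sub_cancel' (by omega) : m + (j - m) = j))
        (f.1 ⟨j - m, by omega⟩)
    else x.1 j
  have hr_seg (k : ℕ) (hk : k ≤ L) : r (m + k) = f.1 ⟨k, by omega⟩ := by
    simp only [r, dif_neg (by omega : ¬ m + k < m), dif_pos (by omega : m + k ≤ m + L)]
    exact eq_of_heq ((cast_heq _ _).trans (congr_arg_heq f.1 (Fin.ext (by simp))))
  have hr_tail (i : ℕ) (hi : m + L + 1 ≤ i) : r i = x.1 i := by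
    simp only [r, dif_neg (by omega : ¬ i < m), dif_neg (by omega : ¬ i ≤ m + L)]
  refine ⟨⟨r, fun j => ?_⟩, fun i hi => dif_pos hi, hr_tail⟩
  rcases lt_or_ge (j + 1) m with hj | hj
  · simp only [r, dif_pos hj, dif_pos (by omega : j < m)]
    exact z.2 j
  obtain rfl | hjm := eq_or_lt_of_le hj
  · rw [hr_seg 0 (Nat.zero_le L), hfz]
    simp only [r, dif_pos j.lt_succ_self]
    exact z.2 j
  obtain ⟨k, rfl⟩ := Nat.exists_eq_add_of_le (Nat.le_of_lt_succ hjm)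
  rcases lt_trichotomy k L with hk | rfl | hk
  · rw [hr_seg k hk.le, show r (m + k + 1) = _ from hr_seg (k + 1) hk]
    exact f.2 k hk
  · rw [hr_seg k le_rfl, hfx, hr_tail _ le_rfl]
  · rw [hr_tail _ (by omega), hr_tail _ (by omega)]
    exact x.2 _

theorem cylSwap_mem_sup_of_mixed {n : ℕ} {A C : Set B.Path} (hA : Determined n A)
    (hC : Determined n C) {p q r : B.Path} (hpq : ∀ i, n ≤ i → p.1 i = q.1 i)
    (hpr : ∀ i, n ≤ i → p.1 i = r.1 i) (hp : p ∉ A ∧ p ∈ C) (hq : q ∈ A ∧ q ∉ C)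
    (hr : r ∉ A ∪ C) : cylSwap n p q hpq ∈ B.Gcirc A ⊔ B.Gcirc C := by
  have hrq : ∀ i, n ≤ i → r.1 i = q.1 i := fun i hi => (hpr i hi).symm.trans (hpq i hi)
  have hqp : pr n q ≠ pr n p := fun h => hp.1 ((hA q p h).1 hq.1)
  have hqr : pr n q ≠ pr n r := fun h => hr (Or.inl ((hA q r h).1 hq.1))
  rw [cylSwap_eq_conj hpq hpr hrq hqp hqr]
  have hpr_mem : cylSwap n p r hpr ∈ B.Gcirc A ⊔ B.Gcirc C :=
    Subgroup.mem_sup_left (cylSwap_mem_Gcirc hA hpr hp.1 fun h => hr (Or.inl h))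
  exact mul_mem (mul_mem hpr_mem
    (Subgroup.mem_sup_right (cylSwap_mem_Gcirc hC hrq (fun h => hr (Or.inr h)) hq.2))) hpr_mem

theorem cylSwap_mem_sup {n : ℕ} {A C : Set B.Path} (hA : Determined n A) (hC : Determined n C)
    (hreserve : ∀ p : B.Path, ∃ r : B.Path, (∀ i, n ≤ i → p.1 i = r.1 i) ∧ r ∉ A ∪ C)
    {p q : B.Path} (hpq : ∀ i, n ≤ i → p.1 i = q.1 i) (hp : p ∉ A ∩ C) (hq : q ∉ A ∩ C) :
    cylSwap n p q hpq ∈ B.Gcirc A ⊔ B.Gcirc C := by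
  by_cases hA' : p ∉ A ∧ q ∉ A
  · exact Subgroup.mem_sup_left (cylSwap_mem_Gcirc hA hpq hA'.1 hA'.2)
  by_cases hC' : p ∉ C ∧ q ∉ C
  · exact Subgroup.mem_sup_right (cylSwap_mem_Gcirc hC hpq hC'.1 hC'.2)
  obtain ⟨r, hpr, hr⟩ := hreserve p
  by_cases hpA : p ∈ A
  · rw [sup_comm]
    exact cylSwap_mem_sup_of_mixed hC hA hpq hpr (by tauto) (by tauto) (by rwa [Set.union_comm])
  · exact cylSwap_mem_sup_of_mixed hA hC hpq hpr (by tauto) (by tauto) hr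

theorem Gcirc_inter (hsimple : B.IsSimple) {A C : Set B.Path} (hA : IsClopen A) (hC : IsClopen C)
    (hU : A ∪ C ≠ Set.univ) : B.Gcirc (A ∩ C) = B.Gcirc A ⊔ B.Gcirc C := by
  refine le_antisymm (fun g hg => ?_)
    (sup_le (Gcirc_anti Set.inter_subset_left) (Gcirc_anti Set.inter_subset_right))
  obtain ⟨a, hAa⟩ := exists_determined_of_isClopen hA
  obtain ⟨c, hCc⟩ := exists_determined_of_isClopen hC
  obtain ⟨z, hz⟩ := (Set.ne_univ_iff_exists_notMem _).1 hU
  obtain ⟨L, hL⟩ := hsimple (max a c)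
  obtain ⟨k, hgk⟩ := g.2
  set n := max k (max a c + L + 1)
  have hAn := hAa.mono (by omega : a ≤ n)
  have hCn := hCc.mono (by omega : c ≤ n)
  have hreserve (p : B.Path) : ∃ r : B.Path, (∀ i, n ≤ i → p.1 i = r.1 i) ∧ r ∉ A ∪ C := by
    obtain ⟨r, hrz, hrp⟩ := exists_path_prefix_tail hL z p
    refine ⟨r, fun i hi => (hrp i (by omega)).symm, fun hr => hz ?_⟩
    exact (((hAa.mono (le_max_left a c)).union (hCc.mono (le_max_right a c))) r z
      (pr_eq_pr_iff.2 hrz)).1 hr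
  exact GcircN_le_of_cylSwap_mem (hAn.inter hCn)
    (fun p q hpq hp hq => cylSwap_mem_sup hAn hCn hreserve hpq hp hq)
    ⟨B.level_mono (le_max_left _ _) hgk, hg⟩

theorem mem_FF_iff {A : Set B.Path} {H : Subgroup B.fullGroup} :
    H ∈ B.FF A ↔ B.Gcirc A ≤ Subgroup.normalizer (H : Set B.fullGroup) :=
  forall₂_congr fun _ _ => Subgroup.mem_normalizer_iff_map_conj_eq.symm

end BratteliDiagram

/-- for clopen sets `A, C` with `A ∪ C ≠ X`, `F(A ∩ C) = F(A) ∩ F(C)`. -/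
theorem FF_inter (B : BratteliDiagram) (hsimple : B.IsSimple)
    (A C : Set B.Path) (hA : IsClopen A) (hC : IsClopen C)
    (hU : A ∪ C ≠ Set.univ) :
    B.FF (A ∩ C) = B.FF A ∩ B.FF C := by
  ext H
  simp only [Set.mem_inter_iff, BratteliDiagram.mem_FF_iff,
    BratteliDiagram.Gcirc_inter hsimple hA hC hU, sup_le_iff]
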